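/- arXiv:2505.13299 — 3 statements merged into one kernel-verified Lean document; each statement's English description precedes it below -/
import Mathlib

section
/- Monotonicity of the smoothed SGD quantile iterates: for any index 1 ≤ i ≤ p, any quantile levels τ ≥ τ' and any k ∈ ℕ, the smoothed SGD iterates satisfy Y_{i,k}(τ) ≥ Y_{i,k}(τ'). (This holds for arbitrary real inputs X_{i,k}; no distributional assumption is needed.) -/
open Real

/-- The piecewise-linear smoothing of the indicator function:
`g(x) = 1` if `x ≥ 1`, `g(x) = (x+1)/2` if `-1 ≤ x < 1`, `g(x) = 0` if `x < -1`. -/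
noncomputable def gfun (x : ℝ) : ℝ :=
  if 1 ≤ x then 1 else if -1 ≤ x then (x + 1) / 2 else 0

/-- Rescaled smoothing function `g_h(x) = g(x/h)`. -/
noncomputable def gsm (h x : ℝ) : ℝ := gfun (x / h)

/-- Learning rate `γ_k = c_γ k^{-β}`. -/
noncomputable def gam (cγ β : ℝ) (k : ℕ) : ℝ := cγ * (k : ℝ) ^ (-β)

lemma gfun_lip {t s : ℝ} (h : t ≤ s) :
    gfun s - gfun t ≤ (s - t) / 2 ∧ 0 ≤ gfun s - gfun t := by
  unfold gfun
  split_ifs <;> constructor <;> linarith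

/-- **Monotonicity of the smoothed SGD quantile iterates** (Lemma 1):
for any index `1 ≤ i ≤ p`, any quantile levels `τ ≥ τ'` and any `k ∈ ℕ`,
the smoothed SGD iterates satisfy `Y_{i,k}(τ) ≥ Y_{i,k}(τ')`.
This holds for arbitrary real inputs `X_{i,k}`. -/
theorem smoothed_sgd_monotone
    (p : ℕ) (cγ β a : ℝ) (hcγ : 0 < cγ) (hβ1 : 1 / 2 < β) (hβ2 : β < 1)
    (ha : 1 / 2 < a)
    (X : ℕ → ℕ → ℝ) (y : ℕ → ℝ)
    (Y : ℕ → ℕ → ℝ → ℝ)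
    (hY1 : ∀ i τ, Y i 1 τ = y i)
    (hYrec : ∀ i k τ, 1 ≤ k →
      Y i (k + 1) τ =
        Y i k τ + gam cγ β k * (τ - gsm (a * gam cγ β k) (Y i k τ - X i (k + 1))))
    (i : ℕ) (hi1 : 1 ≤ i) (hip : i ≤ p)
    (τ τ' : ℝ) (hττ' : τ' ≤ τ) (k : ℕ) (hk : 1 ≤ k) :
    Y i k τ' ≤ Y i k τ := by
  induction k, hk using Nat.le_induction with
  | base => rw [hY1, hY1]
  | succ k hk ih =>
    rw [hYrec i k τ hk, hYrec i k τ' hk]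
    set γ := gam cγ β k with hγdef
    have hkpos : (0 : ℝ) < (k : ℝ) := by exact_mod_cast Nat.lt_of_lt_of_le Nat.zero_lt_one hk
    have hγ : 0 < γ := mul_pos hcγ (Real.rpow_pos_of_pos hkpos _)
    have hh : 0 < a * γ := mul_pos (by linarith) hγ
    set u := Y i k τ - X i (k + 1) with hu
    set v := Y i k τ' - X i (k + 1) with hv
    have huv : v ≤ u := by dsimp [u, v]; linarith
    have hdiv : v / (a * γ) ≤ u / (a * γ) := by gcongr
    obtain ⟨hlip, hmono⟩ := gfun_lip hdiv
    have e1 : γ * ((u / (a * γ) - v / (a * γ)) / 2) = (u - v) / (2 * a) := by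
      field_simp
    have e2 : (u - v) / (2 * a) ≤ u - v := by
      rw [div_le_iff₀ (by linarith : (0:ℝ) < 2 * a)]
      nlinarith
    have h3 : γ * (gfun (u / (a * γ)) - gfun (v / (a * γ))) ≤ u - v := by
      calc γ * (gfun (u / (a * γ)) - gfun (v / (a * γ)))
          ≤ γ * ((u / (a * γ) - v / (a * γ)) / 2) :=
            mul_le_mul_of_nonneg_left (by linarith) hγ.le
        _ = (u - v) / (2 * a) := e1
        _ ≤ u - v := e2
    have h4 : γ * τ' ≤ γ * τ := mul_le_mul_of_nonneg_left hττ' hγ.le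
    unfold gsm
    have huv' : u - v = Y i k τ - Y i k τ' := by dsimp [u, v]; ring
    nlinarith [h3, h4]
end

section
/- Lipschitz dependence of the iterates on the quantile level: for any index 1 ≤ i ≤ p, any quantile levels τ ≤ τ' and any k ∈ ℕ, the smoothed SGD iterates satisfy 0 ≤ Y_{i,k}(τ') − Y_{i,k}(τ) ≤ (Σ_{j=1}^{k−1} γ_j)(τ' − τ) ≤ c_γ (1−β)^{−1} k^{1−β} (τ' − τ). (This holds for arbitrary real inputs X_{i,k}.) -/
/-!
Fix `i` and write `d_k = Y_k(τ') - Y_k(τ)`. Both runs see the same inputs `X_{k+1}`, so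
`d_{k+1} = d_k + γ_k (τ' - τ) - γ_k (g_h(Y_k(τ') - X_{k+1}) - g_h(Y_k(τ) - X_{k+1}))` with
`h = a γ_k`. As `g_h` is nondecreasing and `1/(2h)`-Lipschitz, the last bracket times `γ_k` lies
between `0` and `d_k / (2a) ≤ d_k`, whence `0 ≤ d_{k+1} ≤ d_k + γ_k (τ' - τ)` by induction.
Finally `Σ_{j ≤ m} j^{-β} ≤ m^{1-β} / (1 - β)` by telescoping the concavity bound
`(1 - β) (n + 1)^{-β} ≤ (n + 1)^{1-β} - n^{1-β}`.
-/

open Real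

lemma monotone_gfun : Monotone gfun := fun x y hxy => by
  unfold gfun; split_ifs <;> linarith

lemma gfun_sub_le {x y : ℝ} (hxy : x ≤ y) : gfun y - gfun x ≤ (y - x) / 2 := by
  unfold gfun; split_ifs <;> linarith

lemma monotone_gsm {h : ℝ} (hh : 0 ≤ h) : Monotone (gsm h) := fun _ _ hxy =>
  monotone_gfun (div_le_div_of_nonneg_right hxy hh)

lemma gsm_sub_le {h x y : ℝ} (hh : 0 ≤ h) (hxy : x ≤ y) :
    gsm h y - gsm h x ≤ (y - x) / (2 * h) :=
  calc gfun (y / h) - gfun (x / h) ≤ (y / h - x / h) / 2 :=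
        gfun_sub_le (div_le_div_of_nonneg_right hxy hh)
    _ = (y - x) / (2 * h) := by rw [← sub_div, div_div, mul_comm]

/-- The lower bound is where `γ ≤ 2h` enters: `g_h` is `1 / (2h)`-Lipschitz, so
`x ↦ x - γ g_h (x - c)` is nondecreasing. -/
lemma sgd_step_sub_bounds {γ h τ τ' c x x' : ℝ} (hγ : 0 ≤ γ) (hh : 0 < h) (hγh : γ ≤ 2 * h)
    (hτ : τ ≤ τ') (hx : x ≤ x') :
    0 ≤ (x' + γ * (τ' - gsm h (x' - c))) - (x + γ * (τ - gsm h (x - c))) ∧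
      (x' + γ * (τ' - gsm h (x' - c))) - (x + γ * (τ - gsm h (x - c))) ≤
        (x' - x) + γ * (τ' - τ) := by
  have hxc : x - c ≤ x' - c := by linarith
  have hg_mono : 0 ≤ gsm h (x' - c) - gsm h (x - c) :=
    sub_nonneg.mpr (monotone_gsm hh.le hxc)
  have hg_lip : γ * (gsm h (x' - c) - gsm h (x - c)) ≤ x' - x :=
    calc γ * (gsm h (x' - c) - gsm h (x - c)) ≤ γ * ((x' - x) / (2 * h)) := by
          gcongr
          simpa using gsm_sub_le hh.le hxc
      _ = γ / (2 * h) * (x' - x) := by ring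
      _ ≤ 1 * (x' - x) := by
          gcongr
          exact (div_le_one (by positivity)).mpr hγh
      _ = x' - x := one_mul _
  have hγτ : 0 ≤ γ * (τ' - τ) := mul_nonneg hγ (sub_nonneg.mpr hτ)
  constructor
  · linarith
  · linarith [mul_nonneg hγ hg_mono]

lemma iterate_sub_bounds {γ h X Y Y' : ℕ → ℝ} {τ τ' : ℝ} (hγ : ∀ k, 1 ≤ k → 0 ≤ γ k)
    (hh : ∀ k, 1 ≤ k → 0 < h k) (hγh : ∀ k, 1 ≤ k → γ k ≤ 2 * h k) (hτ : τ ≤ τ')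
    (hY₁ : Y 1 = Y' 1)
    (hY : ∀ k, 1 ≤ k → Y (k + 1) = Y k + γ k * (τ - gsm (h k) (Y k - X k)))
    (hY' : ∀ k, 1 ≤ k → Y' (k + 1) = Y' k + γ k * (τ' - gsm (h k) (Y' k - X k))) (m : ℕ) :
    0 ≤ Y' (m + 1) - Y (m + 1) ∧
      Y' (m + 1) - Y (m + 1) ≤ (∑ j ∈ Finset.Icc 1 m, γ j) * (τ' - τ) := by
  induction m with
  | zero => simp [hY₁]
  | succ n ih =>
    have hn : 1 ≤ n + 1 := Nat.le_add_left 1 n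
    obtain ⟨hstep_nonneg, hstep_le⟩ := sgd_step_sub_bounds (c := X (n + 1))
      (hγ _ hn) (hh _ hn) (hγh _ hn) hτ (sub_nonneg.mp ih.1)
    rw [hY _ hn, hY' _ hn, Finset.sum_Icc_succ_top hn]
    exact ⟨hstep_nonneg, by linarith [ih.2]⟩

lemma mul_rpow_sub_one_le_rpow_add_one_sub_rpow {p x : ℝ} (hp₀ : 0 ≤ p) (hp₁ : p ≤ 1)
    (hx : 0 ≤ x) : p * (x + 1) ^ (p - 1) ≤ (x + 1) ^ p - x ^ p := by
  have hx₁ : 0 < x + 1 := by linarith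
  have hs : -1 ≤ -(x + 1)⁻¹ := neg_le_neg (inv_le_one_of_one_le₀ (by linarith))
  have hbernoulli := rpow_one_add_le_one_add_mul_self hs hp₀ hp₁
  rw [show 1 + -(x + 1)⁻¹ = x / (x + 1) by field_simp; ring, div_rpow hx hx₁.le,
    div_le_iff₀ (rpow_pos_of_pos hx₁ p)] at hbernoulli
  rw [rpow_sub_one hx₁.ne', div_eq_mul_inv]
  linarith

lemma sum_Icc_rpow_neg_le {β : ℝ} (hβ₀ : 0 ≤ β) (hβ₁ : β < 1) (m : ℕ) :
    ∑ j ∈ Finset.Icc 1 m, (j : ℝ) ^ (-β) ≤ (1 - β)⁻¹ * (m : ℝ) ^ (1 - β) := by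
  induction m with
  | zero => simp [zero_rpow (sub_ne_zero.mpr hβ₁.ne')]
  | succ n ih =>
    have hincr := mul_rpow_sub_one_le_rpow_add_one_sub_rpow (p := 1 - β) (x := n)
      (by linarith) (by linarith) n.cast_nonneg
    rw [sub_sub_cancel_left] at hincr
    rw [Finset.sum_Icc_succ_top (Nat.le_add_left 1 n), Nat.cast_succ]
    have hβ : 0 < 1 - β := by linarith
    calc ∑ j ∈ Finset.Icc 1 n, (j : ℝ) ^ (-β) + ((n : ℝ) + 1) ^ (-β)
        ≤ (1 - β)⁻¹ * (n : ℝ) ^ (1 - β) + (1 - β)⁻¹ * ((1 - β) * ((n : ℝ) + 1) ^ (-β)) := by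
          rw [inv_mul_cancel_left₀ hβ.ne']; linarith
      _ ≤ (1 - β)⁻¹ * ((n : ℝ) + 1) ^ (1 - β) := by
          rw [← mul_add]; gcongr; linarith

theorem smoothed_sgd_lipschitz_in_tau_general
    (cγ β a : ℝ) (hcγ : 0 < cγ) (hβ1 : 1 / 2 < β) (hβ2 : β < 1)
    (ha : 1 / 2 < a)
    (X : ℕ → ℕ → ℝ) (y : ℕ → ℝ)
    (Y : ℕ → ℕ → ℝ → ℝ)
    (hY1 : ∀ i τ, Y i 1 τ = y i)
    (hYrec : ∀ i k τ, 1 ≤ k →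
      Y i (k + 1) τ =
        Y i k τ + gam cγ β k * (τ - gsm (a * gam cγ β k) (Y i k τ - X i (k + 1))))
    (i : ℕ)
    (τ τ' : ℝ) (hττ' : τ ≤ τ') (k : ℕ) (hk : 1 ≤ k) :
    0 ≤ Y i k τ' - Y i k τ ∧
      Y i k τ' - Y i k τ ≤ (∑ j ∈ Finset.Icc 1 (k - 1), gam cγ β j) * (τ' - τ) ∧
      (∑ j ∈ Finset.Icc 1 (k - 1), gam cγ β j) * (τ' - τ) ≤
        cγ * (1 - β)⁻¹ * (k : ℝ) ^ (1 - β) * (τ' - τ) := by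
  have hγ : ∀ k, 1 ≤ k → 0 < gam cγ β k := fun k hk =>
    mul_pos hcγ (rpow_pos_of_pos (Nat.cast_pos.mpr hk) _)
  obtain ⟨m, rfl⟩ : ∃ m, k = m + 1 := ⟨k - 1, by omega⟩
  obtain ⟨hdiff_nonneg, hdiff_le⟩ := iterate_sub_bounds (h := fun k => a * gam cγ β k)
    (X := fun k => X i (k + 1)) (Y := fun k => Y i k τ) (Y' := fun k => Y i k τ')
    (fun k hk => (hγ k hk).le) (fun k hk => mul_pos (by linarith) (hγ k hk))
    (fun k hk => by nlinarith [hγ k hk]) hττ' ((hY1 i τ).trans (hY1 i τ').symm)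
    (fun k hk => hYrec i k τ hk) (fun k hk => hYrec i k τ' hk) m
  rw [Nat.add_sub_cancel]
  refine ⟨hdiff_nonneg, hdiff_le, ?_⟩
  calc (∑ j ∈ Finset.Icc 1 m, gam cγ β j) * (τ' - τ)
      = cγ * (∑ j ∈ Finset.Icc 1 m, (j : ℝ) ^ (-β)) * (τ' - τ) := by
        rw [Finset.mul_sum]; rfl
    _ ≤ cγ * ((1 - β)⁻¹ * (m : ℝ) ^ (1 - β)) * (τ' - τ) := by
        gcongr
        exact sum_Icc_rpow_neg_le (by linarith) hβ2 m
    _ ≤ cγ * (1 - β)⁻¹ * ((m + 1 : ℕ) : ℝ) ^ (1 - β) * (τ' - τ) := by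
        rw [← mul_assoc]
        gcongr
        linarith

/-- **Lipschitz dependence of the iterates on the quantile level**:
for any index `1 ≤ i ≤ p`, any quantile levels `τ ≤ τ'` and any `k ∈ ℕ`,
`0 ≤ Y_{i,k}(τ') − Y_{i,k}(τ) ≤ (Σ_{j=1}^{k−1} γ_j)(τ' − τ)
  ≤ c_γ (1−β)⁻¹ k^{1−β} (τ' − τ)`.
This holds for arbitrary real inputs `X_{i,k}`. -/
theorem smoothed_sgd_lipschitz_in_tau
    (p : ℕ) (cγ β a : ℝ) (hcγ : 0 < cγ) (hβ1 : 1 / 2 < β) (hβ2 : β < 1)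
    (ha : 1 / 2 < a)
    (X : ℕ → ℕ → ℝ) (y : ℕ → ℝ)
    (Y : ℕ → ℕ → ℝ → ℝ)
    (hY1 : ∀ i τ, Y i 1 τ = y i)
    (hYrec : ∀ i k τ, 1 ≤ k →
      Y i (k + 1) τ =
        Y i k τ + gam cγ β k * (τ - gsm (a * gam cγ β k) (Y i k τ - X i (k + 1))))
    (i : ℕ) (hi1 : 1 ≤ i) (hip : i ≤ p)
    (τ τ' : ℝ) (hττ' : τ ≤ τ') (k : ℕ) (hk : 1 ≤ k) :
    0 ≤ Y i k τ' - Y i k τ ∧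
      Y i k τ' - Y i k τ ≤ (∑ j ∈ Finset.Icc 1 (k - 1), gam cγ β j) * (τ' - τ) ∧
      (∑ j ∈ Finset.Icc 1 (k - 1), gam cγ β j) * (τ' - τ) ≤
        cγ * (1 - β)⁻¹ * (k : ℝ) ^ (1 - β) * (τ' - τ) :=
  smoothed_sgd_lipschitz_in_tau_general cγ β a hcγ hβ1 hβ2 ha X y Y hY1 hYrec i τ τ' hττ' k hk
end

section
/- Smoothing bias bound: let X be a real random variable with a density bounded by f_∞ and let γ > 0 and a > 0. Then for every x ∈ ℝ, |P(X ≤ x) − E[g_{aγ}(x − X)]| ≤ 2 a γ f_∞, i.e. |E[1{x − X ≥ 0} − g_{aγ}(x − X)]| ≤ 2 a γ f_∞. -/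
open MeasureTheory Real

/-!
The indicator of `t ≤ x` and the smoothed step `t ↦ g_h(x - t)` agree outside the window
`[x - h, x + h]` and differ by at most `1` inside it, so the bias is at most the mass the law of
`X` puts on that window, which a density bounded by `f_∞` caps at `2 h f_∞`.
-/

open Set

lemma gfun_mem_Icc (y : ℝ) : gfun y ∈ Icc (0 : ℝ) 1 := by
  unfold gfun
  split_ifs <;> constructor <;> linarith

lemma gfun_of_one_le {y : ℝ} (hy : 1 ≤ y) : gfun y = 1 := if_pos hy

lemma gfun_of_lt_neg_one {y : ℝ} (hy : y < -1) : gfun y = 0 := by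
  rw [gfun, if_neg (by linarith), if_neg (by linarith)]

lemma gsm_mem_Icc (h y : ℝ) : gsm h y ∈ Icc (0 : ℝ) 1 := gfun_mem_Icc _

lemma measurable_gfun : Measurable gfun :=
  Measurable.ite (measurableSet_le measurable_const measurable_id) measurable_const <|
    Measurable.ite (measurableSet_le measurable_const measurable_id) (by fun_prop) measurable_const

lemma measurable_gsm (h : ℝ) : Measurable (gsm h) :=
  measurable_gfun.comp (measurable_id.div_const h)

lemma abs_indicator_Iic_sub_gsm_le {h : ℝ} (hh : 0 < h) (x t : ℝ) :
    |(Iic x).indicator (1 : ℝ → ℝ) t - gsm h (x - t)| ≤ (Icc (x - h) (x + h)).indicator 1 t := by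
  rcases lt_or_ge t (x - h) with hlt | hge
  · have hg : gsm h (x - t) = 1 := gfun_of_one_le ((le_div_iff₀ hh).2 (by linarith))
    rw [indicator_of_mem (show t ∈ Iic x by simp only [mem_Iic]; linarith), hg]
    simp only [Pi.one_apply, sub_self, abs_zero]
    exact indicator_nonneg (fun _ _ => zero_le_one) t
  rcases lt_or_ge (x + h) t with hgt | hle
  · have hg : gsm h (x - t) = 0 := gfun_of_lt_neg_one ((div_lt_iff₀ hh).2 (by linarith))
    rw [indicator_of_notMem (show t ∉ Iic x by simp only [mem_Iic, not_le]; linarith), hg]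
    simp only [sub_self, abs_zero]
    exact indicator_nonneg (fun _ _ => zero_le_one) t
  · obtain ⟨hg0, hg1⟩ := gsm_mem_Icc h (x - t)
    rw [indicator_of_mem (show t ∈ Icc (x - h) (x + h) from ⟨hge, hle⟩), Pi.one_apply, abs_le]
    rcases indicator_eq_zero_or_self (Iic x) (1 : ℝ → ℝ) t with h0 | h1
    · rw [h0]; constructor <;> linarith
    · rw [h1, Pi.one_apply]; constructor <;> linarith

lemma abs_measureReal_Iic_sub_integral_gsm_le (ν : Measure ℝ) [IsFiniteMeasure ν] {h : ℝ}
    (hh : 0 < h) (x : ℝ) :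
    |ν.real (Iic x) - ∫ t, gsm h (x - t) ∂ν| ≤ ν.real (Icc (x - h) (x + h)) := by
  have hstep : Integrable ((Iic x).indicator 1) ν :=
    (integrable_const (1 : ℝ)).indicator measurableSet_Iic
  have hsmooth : Integrable (fun t => gsm h (x - t)) ν := by
    refine Integrable.of_bound
      ((measurable_gsm h).comp (measurable_const.sub measurable_id)).aestronglyMeasurable 1
      (ae_of_all _ fun t => ?_)
    obtain ⟨hg0, hg1⟩ := gsm_mem_Icc h (x - t)
    rwa [norm_eq_abs, abs_of_nonneg hg0]
  have hwindow : Integrable ((Icc (x - h) (x + h)).indicator 1) ν :=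
    (integrable_const (1 : ℝ)).indicator measurableSet_Icc
  rw [← integral_indicator_one measurableSet_Iic, ← integral_indicator_one measurableSet_Icc,
    ← integral_sub hstep hsmooth]
  exact abs_integral_le_integral_abs.trans <|
    integral_mono (hstep.sub hsmooth).abs hwindow (abs_indicator_Iic_sub_gsm_le hh x)

lemma measureReal_withDensity_ofReal_le {α : Type*} [MeasurableSpace α] {μ : Measure α}
    {f : α → ℝ} {c : ℝ} (hc : 0 ≤ c) (hf : ∀ t, f t ≤ c) {s : Set α} (hs : MeasurableSet s)
    (hμs : μ s ≠ ⊤) :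
    (μ.withDensity fun t => ENNReal.ofReal (f t)).real s ≤ c * μ.real s := by
  have hle : ∫⁻ t in s, ENNReal.ofReal (f t) ∂μ ≤ ENNReal.ofReal c * μ s := by
    rw [← setLIntegral_const]
    exact setLIntegral_mono measurable_const fun t _ => ENNReal.ofReal_le_ofReal (hf t)
  rw [measureReal_def, withDensity_apply _ hs, measureReal_def, ← ENNReal.toReal_ofReal hc,
    ← ENNReal.toReal_mul]
  exact ENNReal.toReal_mono (ENNReal.mul_ne_top ENNReal.ofReal_ne_top hμs) hle

/-- **Smoothing bias bound**: if `X` is a real random variable with a density bounded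
by `fbd`, and `γ > 0`, `a > 0`, then for every `x ∈ ℝ`,
`|P(X ≤ x) − E[g_{aγ}(x − X)]| ≤ 2 a γ fbd`. -/
theorem smoothing_bias_bound
    {Ω : Type} [MeasurableSpace Ω] (μ : Measure Ω) [IsProbabilityMeasure μ]
    (X : Ω → ℝ) (hX : Measurable X)
    (fd : ℝ → ℝ) (fbd : ℝ)
    (hdens : Measure.map X μ =
      MeasureTheory.volume.withDensity (fun t => ENNReal.ofReal (fd t)))
    (hfd0 : ∀ t, 0 ≤ fd t) (hfd : ∀ t, fd t ≤ fbd)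
    (γ a : ℝ) (hγ : 0 < γ) (ha : 0 < a) (x : ℝ) :
    |(μ {ω | X ω ≤ x}).toReal - ∫ ω, gsm (a * γ) (x - X ω) ∂μ| ≤ 2 * a * γ * fbd := by
  have hh : 0 < a * γ := mul_pos ha hγ
  have hcdf : (μ {ω | X ω ≤ x}).toReal = (μ.map X).real (Iic x) := by
    rw [measureReal_def, Measure.map_apply hX measurableSet_Iic]
    rfl
  have hmean : ∫ ω, gsm (a * γ) (x - X ω) ∂μ = ∫ t, gsm (a * γ) (x - t) ∂(μ.map X) :=
    (integral_map hX.aemeasurable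
      ((measurable_gsm _).comp (measurable_const.sub measurable_id)).aestronglyMeasurable).symm
  rw [hcdf, hmean]
  calc _ ≤ (μ.map X).real (Icc (x - a * γ) (x + a * γ)) :=
        abs_measureReal_Iic_sub_integral_gsm_le _ hh x
    _ ≤ fbd * volume.real (Icc (x - a * γ) (x + a * γ)) := by
        rw [hdens]
        exact measureReal_withDensity_ofReal_le ((hfd0 0).trans (hfd 0)) hfd measurableSet_Icc
          measure_Icc_lt_top.ne
    _ = 2 * a * γ * fbd := by
        rw [Real.volume_real_Icc_of_le (by linarith)]
        ring
end
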